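/- arXiv:0712.2177 — 5 statements merged into one kernel-verified Lean document; each statement's English description precedes it below -/
import Mathlib

section
/- The characteristic function of O_F lies in L(F), and ∫^F 1_{O_F}(x) dx = 0; that is, the measure of the ring of integers O_F is zero. -/
noncomputable section

open MeasureTheory Polynomial
open scoped Classical

/-- The field `ℂ(X)` of complex rational functions. -/
abbrev CX : Type := RatFunc ℂ

/-- A complete discrete valuation field with residue field `K`:
`Fc` is the field, `O` its ring of integers, `t` a fixed prime element,
`res` the residue map and `ν` the discrete valuation.  The axioms say that `O` is a
valuation subring of `Fc`, `t` is irreducible in `O`, `res` is surjective with kernel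
`tO`, every nonzero element is a unit times `t ^ ν`, and `O` is `t`-adically complete. -/
structure CDVF (K : Type) [Field K] : Type 1 where
  Fc : Type
  fieldF : Field Fc
  O : Subring Fc
  t : Fc
  ht : t ∈ O
  res : O →+* K
  ν : Fc → ℤ
  hval : ∀ x : Fc, x ∈ O ∨ x⁻¹ ∈ O
  hirr : Irreducible (⟨t, ht⟩ : O)
  hres_surj : Function.Surjective res
  hres_ker : ∀ x : O, res x = 0 ↔ (⟨t, ht⟩ : O) ∣ x
  hν : ∀ x : Fc, x ≠ 0 → ∃ u : O, IsUnit u ∧ x = (u : Fc) * t ^ ν x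
  hcomplete : ∀ s : ℕ → O, (∀ n : ℕ, (⟨t, ht⟩ : O) ^ n ∣ (s (n + 1) - s n)) →
    ∃ L : O, ∀ n : ℕ, (⟨t, ht⟩ : O) ^ n ∣ (L - s n)

attribute [instance] CDVF.fieldF

namespace CDVF

variable {K : Type} [Field K] (E : CDVF K)

/-- The residue map, extended by zero outside the ring of integers. -/
def resF (x : E.Fc) : K := if h : x ∈ E.O then E.res ⟨x, h⟩ else 0

/-- The translated fractional ideal `a + t^c O`. -/
def tfi (a : E.Fc) (c : ℤ) : Set E.Fc := {y : E.Fc | ∃ z ∈ E.O, y = a + E.t ^ c * z}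

/-- The lift `f⁰` of a function on the residue field. -/
def lift0 (f : K → ℂ) : E.Fc → CX := fun x =>
  if x ∈ E.O then algebraMap ℂ CX (f (E.resF x)) else 0

/-- The lift `f^{a,n}` of `f` at `a, n`, determined by `f^{a,n}(a + t^n x) = f⁰(x)`. -/
def liftAt (f : K → ℂ) (a : E.Fc) (n : ℤ) : E.Fc → CX := fun z =>
  E.lift0 f (E.t ^ (-n) * (z - a))

/-- The two-dimensional lift `f⁰` of `f : K × K → ℂ`. -/
def lift0₂ (f : K × K → ℂ) : E.Fc → E.Fc → CX := fun x y =>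
  if x ∈ E.O ∧ y ∈ E.O then algebraMap ℂ CX (f (E.resF x, E.resF y)) else 0

/-- The lift of `f : K × K → ℂ` at `(a₁,a₂),(n₁,n₂)`. -/
def liftAt₂ (f : K × K → ℂ) (a₁ a₂ : E.Fc) (n₁ n₂ : ℤ) : E.Fc → E.Fc → CX := fun z w =>
  E.lift0₂ f (E.t ^ (-n₁) * (z - a₁)) (E.t ^ (-n₂) * (w - a₂))

/-- The space `L(F)` of integrable functions on `F`: the `ℂ(X)`-span of the lifts
`f^{a,n}` of Haar integrable functions `f` on the residue field. -/
def LF [MeasurableSpace K] (μ : Measure K) : Submodule CX (E.Fc → CX) :=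
  Submodule.span CX
    {g : E.Fc → CX | ∃ f : K → ℂ, Integrable f μ ∧ ∃ (a : E.Fc) (n : ℤ), g = E.liftAt f a n}

/-- `Φ(x,y) = f⁰(x, y − t^R q(x))`. -/
def Phi (f : K × K → ℂ) (R : ℤ) (q : Polynomial E.O) : E.Fc → E.Fc → CX := fun x y =>
  E.lift0₂ f x (y - E.t ^ R * Polynomial.eval x (q.map E.O.subtype))

/-- The non-singular part `Φ_ns` of `Φ`: the restriction of `Φ` to `W_ns × F`,
extended by zero, where `W_ns = {x ∈ O : q̄′(x̄) ≠ 0}`. -/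
def PhiNS (f : K × K → ℂ) (R : ℤ) (q : Polynomial E.O) : E.Fc → E.Fc → CX := fun x y =>
  if x ∈ E.O ∧ Polynomial.eval (E.resF x) (Polynomial.derivative (q.map E.res)) ≠ 0 then
    E.Phi f R q x y else 0

/-- The singular part `Φ_sing` of `Φ`: the restriction of `Φ` to `W_sing × F`,
extended by zero, where `W_sing = {x ∈ O : q̄′(x̄) = 0}`. -/
def PhiSing (f : K × K → ℂ) (R : ℤ) (q : Polynomial E.O) : E.Fc → E.Fc → CX := fun x y =>
  if x ∈ E.O ∧ Polynomial.eval (E.resF x) (Polynomial.derivative (q.map E.res)) = 0 then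
    E.Phi f R q x y else 0

end CDVF

section Normed

variable {K : Type} [NontriviallyNormedField K]

/-- The absolute value `|α| = |res(α t^{−ν(α)})|_K ⬝ X^{ν(α)} ∈ ℂ(X)` of `α ∈ F^×`. -/
def CDVF.absF (E : CDVF K) (α : E.Fc) : CX :=
  algebraMap ℂ CX ((‖E.resF (α * E.t ^ (-E.ν α))‖ : ℝ) : ℂ) * RatFunc.X ^ E.ν α

/-- Schwartz–Bruhat functions on `K × K` (for nonarchimedean `K`: the locally constant
functions of compact support). -/
def IsSB (f : K × K → ℂ) : Prop := IsLocallyConstant f ∧ HasCompactSupport f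

variable [MeasurableSpace K] (μ : Measure K)

/-- A Haar integrable `f : K × K → ℂ` is Fubini: both repeated integrals exist and agree. -/
def KFubini (f : K × K → ℂ) : Prop :=
  Integrable f (μ.prod μ) ∧
  (∀ u : K, Integrable (fun v => f (u, v)) μ) ∧
  (∀ v : K, Integrable (fun u => f (u, v)) μ) ∧
  Integrable (fun u => ∫ v, f (u, v) ∂μ) μ ∧
  Integrable (fun v => ∫ u, f (u, v) ∂μ) μ ∧
  (∫ u, ∫ v, f (u, v) ∂μ ∂μ) = ∫ v, ∫ u, f (u, v) ∂μ ∂μ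

/-- `I` is the two-dimensional integral `∫^F` on `L(F)`: a `ℂ(X)`-linear functional which
lifts the Haar integral, is translation invariant, and is compatible with multiplicative
structure. -/
def CDVF.IsIntegralF (E : CDVF K) (I : (E.Fc → CX) →ₗ[CX] CX) : Prop :=
  (∀ f : K → ℂ, Integrable f μ → I (E.lift0 f) = algebraMap ℂ CX (∫ u, f u ∂μ)) ∧
  (∀ g ∈ E.LF μ, ∀ a : E.Fc, I (fun x => g (x + a)) = I g) ∧
  (∀ g ∈ E.LF μ, ∀ α : E.Fc, α ≠ 0 → I (fun x => g (α * x)) = (E.absF α)⁻¹ * I g)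

/-- A `ℂ(X)`-valued function on `F × F` is Fubini (with respect to the integral `I`):
all sections and repeated integrands are integrable and the two repeated integrals agree. -/
def CDVF.FFubini (E : CDVF K) (I : (E.Fc → CX) →ₗ[CX] CX) (g : E.Fc → E.Fc → CX) : Prop :=
  (∀ x : E.Fc, (fun y => g x y) ∈ E.LF μ) ∧
  ((fun x => I (fun y => g x y)) ∈ E.LF μ) ∧
  (∀ y : E.Fc, (fun x => g x y) ∈ E.LF μ) ∧
  ((fun y => I (fun x => g x y)) ∈ E.LF μ) ∧
  I (fun x => I (fun y => g x y)) = I (fun y => I (fun x => g x y))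

/-- The conclusion of the change-of-variables conjecture for the data
`a₁, a₂, n₁, n₂, h`: for every Schwartz–Bruhat `f` on `K × K`, with `g` the lift of `f` at
`(a₁,a₂),(n₁,n₂)`, the function `(x,y) ↦ g(x, y − h(x))` is Fubini on `F × F` with
repeated integral `∫∫ f du dv ⬝ X^{n₁+n₂}`. -/
def CDVF.ConjHolds (E : CDVF K) (I : (E.Fc → CX) →ₗ[CX] CX)
    (a₁ a₂ : E.Fc) (n₁ n₂ : ℤ) (h : Polynomial E.Fc) : Prop :=
  ∀ f : K × K → ℂ, IsSB f →
    E.FFubini μ I (fun x y => E.liftAt₂ f a₁ a₂ n₁ n₂ x (y - Polynomial.eval x h)) ∧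
    I (fun y => I (fun x => E.liftAt₂ f a₁ a₂ n₁ n₂ x (y - Polynomial.eval x h))) =
      algebraMap ℂ CX (∫ v, ∫ u, f (u, v) ∂μ ∂μ) * RatFunc.X ^ (n₁ + n₂)

end Normed

/-!
With `δ` the indicator of `{0} ⊂ K`, we have `1_O(x) = δ⁰(t x)`. Scaling by `t` and lifting the
Haar integral give `∫^F 1_O = X⁻¹ ⬝ μ {0}`, which vanishes because a Haar measure on the
nondiscrete field `K` has no atoms.
-/

namespace CDVF

variable {K : Type} [Field K] (E : CDVF K)

theorem t_ne_zero : E.t ≠ 0 := fun h => E.hirr.ne_zero (Subtype.ext h)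

theorem mem_O_iff_resF_t_mul_eq_zero {z : E.Fc} (hz : E.t * z ∈ E.O) :
    z ∈ E.O ↔ E.resF (E.t * z) = 0 := by
  rw [resF, dif_pos hz, E.hres_ker]
  refine ⟨fun hzO => ⟨⟨z, hzO⟩, rfl⟩, ?_⟩
  rintro ⟨w, hw⟩
  have hzw : z = w := mul_left_cancel₀ E.t_ne_zero (congrArg Subtype.val hw)
  exact hzw ▸ w.2

theorem liftAt_zero (f : K → ℂ) (n : ℤ) :
    E.liftAt f 0 n = fun z => E.lift0 f (E.t ^ (-n) * z) := by
  funext z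
  simp only [liftAt, sub_zero]

theorem lift0_eq_liftAt (f : K → ℂ) : E.lift0 f = E.liftAt f 0 0 := by
  rw [liftAt_zero, neg_zero, zpow_zero]
  simp only [one_mul]

theorem liftAt_mem_LF [MeasurableSpace K] {μ : Measure K} {f : K → ℂ} (hf : Integrable f μ)
    (a : E.Fc) (n : ℤ) : E.liftAt f a n ∈ E.LF μ :=
  Submodule.subset_span ⟨f, hf, a, n, rfl⟩

theorem lift0_mem_LF [MeasurableSpace K] {μ : Measure K} {f : K → ℂ} (hf : Integrable f μ) :
    E.lift0 f ∈ E.LF μ :=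
  E.lift0_eq_liftAt f ▸ E.liftAt_mem_LF hf 0 0

-- `O = t⁻¹ ⬝ tO`, and `tO` is the kernel of the residue map.
theorem indicator_O_eq_liftAt :
    (E.O : Set E.Fc).indicator (fun _ => (1 : CX)) =
      E.liftAt (({0} : Set K).indicator 1) 0 (-1) := by
  funext z
  simp only [liftAt_zero, neg_neg, zpow_one, lift0]
  by_cases htz : E.t * z ∈ E.O
  · simp only [Set.indicator_apply, SetLike.mem_coe, E.mem_O_iff_resF_t_mul_eq_zero htz,
      Set.mem_singleton_iff, if_pos htz]
    split_ifs <;> simp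
  · have hz : z ∉ E.O := fun hz => htz (E.O.mul_mem E.ht hz)
    rw [Set.indicator_of_notMem hz, if_neg htz]

end CDVF

/-- The characteristic function of the ring of integers lies in L(F) and
its integral, i.e. the measure of O_F, is zero. -/
theorem statement1 {K : Type} [NontriviallyNormedField K] [MeasurableSpace K] [BorelSpace K]
    [LocallyCompactSpace K] (μ : Measure K) [Measure.IsAddHaarMeasure μ]
    (E : CDVF K) (I : (E.Fc → CX) →ₗ[CX] CX) (hI : E.IsIntegralF μ I) :
    Set.indicator (E.O : Set E.Fc) (fun _ => (1 : CX)) ∈ E.LF μ ∧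
    I (Set.indicator (E.O : Set E.Fc) fun _ => (1 : CX)) = 0 := by
  obtain ⟨hlift0, -, hscale⟩ := hI
  set δ : K → ℂ := ({0} : Set K).indicator 1
  have hδ_ae : δ =ᵐ[μ] 0 := indicator_meas_zero (measure_singleton 0)
  have hδ : Integrable δ μ := (integrable_zero _ _ _).congr hδ_ae.symm
  refine ⟨E.indicator_O_eq_liftAt ▸ E.liftAt_mem_LF hδ 0 (-1), ?_⟩
  rw [E.indicator_O_eq_liftAt, E.liftAt_zero, neg_neg, zpow_one,
    hscale _ (E.lift0_mem_LF hδ) _ E.t_ne_zero, hlift0 δ hδ, integral_eq_zero_of_ae hδ_ae,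
    map_zero, mul_zero]
end
end

section
/- If f is a Fubini function on K×K, then its lift f⁰ to F×F (equal to f(x̄,ȳ) on O_F×O_F and 0 elsewhere) is a Fubini function on F×F, with repeated integral ∫^F∫^F f⁰(x,y) dx dy = ∫_K∫_K f(u,v) du dv. -/
noncomputable section

open MeasureTheory Polynomial
open scoped Classical

/-- If f is Fubini on K×K then its lift f⁰ is Fubini on F×F, with
repeated integral ∫^F∫^F f⁰ dx dy = ∫_K∫_K f du dv. -/
theorem statement3 {K : Type} [NontriviallyNormedField K] [MeasurableSpace K] [BorelSpace K]
    [LocallyCompactSpace K] (μ : Measure K) [Measure.IsAddHaarMeasure μ]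
    (E : CDVF K) (I : (E.Fc → CX) →ₗ[CX] CX) (hI : E.IsIntegralF μ I)
    (f : K × K → ℂ) (hf : KFubini μ f) :
    E.FFubini μ I (E.lift0₂ f) ∧
    I (fun y => I (fun x => E.lift0₂ f x y)) =
      algebraMap ℂ CX (∫ v, ∫ u, f (u, v) ∂μ ∂μ) := by
  obtain ⟨hfint, hfu, hfv, hFu, hFv, hsw⟩ := hf
  have hmem : ∀ g : K → ℂ, Integrable g μ → E.lift0 g ∈ E.LF μ := by
    intro g hg
    apply Submodule.subset_span
    refine ⟨g, hg, 0, 0, ?_⟩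
    funext z
    simp [CDVF.liftAt]
  have hsecx : ∀ x : E.Fc, (fun y => E.lift0₂ f x y) =
      if x ∈ E.O then E.lift0 (fun v => f (E.resF x, v)) else 0 := by
    intro x
    split_ifs with hx
    · funext y; simp [CDVF.lift0₂, CDVF.lift0, hx]
    · funext y; simp [CDVF.lift0₂, hx]
  have hsecy : ∀ y : E.Fc, (fun x => E.lift0₂ f x y) =
      if y ∈ E.O then E.lift0 (fun u => f (u, E.resF y)) else 0 := by
    intro y
    split_ifs with hy
    · funext x; simp [CDVF.lift0₂, CDVF.lift0, hy]
    · funext x; simp [CDVF.lift0₂, hy]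
  have hIx : ∀ x : E.Fc, I (fun y => E.lift0₂ f x y) =
      E.lift0 (fun u => ∫ v, f (u, v) ∂μ) x := by
    intro x
    rw [hsecx x]
    split_ifs with hx
    · rw [hI.1 _ (hfu (E.resF x))]
      simp [CDVF.lift0, hx]
    · simp [CDVF.lift0, hx]
  have hIy : ∀ y : E.Fc, I (fun x => E.lift0₂ f x y) =
      E.lift0 (fun v => ∫ u, f (u, v) ∂μ) y := by
    intro y
    rw [hsecy y]
    split_ifs with hy
    · rw [hI.1 _ (hfv (E.resF y))]
      simp [CDVF.lift0, hy]
    · simp [CDVF.lift0, hy]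
  have hIxfun : (fun x => I (fun y => E.lift0₂ f x y)) = E.lift0 (fun u => ∫ v, f (u, v) ∂μ) :=
    funext hIx
  have hIyfun : (fun y => I (fun x => E.lift0₂ f x y)) = E.lift0 (fun v => ∫ u, f (u, v) ∂μ) :=
    funext hIy
  refine ⟨⟨?_, ?_, ?_, ?_, ?_⟩, ?_⟩
  · intro x
    rw [hsecx x]
    split_ifs with hx
    · exact hmem _ (hfu (E.resF x))
    · exact zero_mem _
  · rw [hIxfun]; exact hmem _ hFu
  · intro y
    rw [hsecy y]
    split_ifs with hy
    · exact hmem _ (hfv (E.resF y))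
    · exact zero_mem _
  · rw [hIyfun]; exact hmem _ hFv
  · rw [hIxfun, hIyfun, hI.1 _ hFu, hI.1 _ hFv]
    exact congrArg _ hsw
  · rw [hIyfun, hI.1 _ hFv]
end
end

section
/- Let q ∈ O_F[X] be a polynomial of degree ≥ 1 with non-zero image q̄ ∈ K[X], let b ∈ F, and suppose a ∈ O_F satisfies q(a) = b and q̄′(ā) ≠ 0. Then for every integer A ≥ 1, {x ∈ O_F : x̄ = ā and q(x) ∈ b + t^A O_F} = a + t^A O_F, and the residue field approximation of q with respect to a + t^A O_F and b + t^A O_F (and representatives a, b) is ψ(X) = q̄′(ā)·X. -/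
/-! Writing `y = a + h` with `h̄ = 0`, Taylor expansion gives `q(y) = q(a) + h·u` with
`ū = q̄′(ā) ≠ 0`, so `u` is a unit of `O`. Hence `q(y) - q(a)` and `y - a` have the same
valuation, which gives the set equality, and dividing `q(a + t^A x) - q(a) = t^A x·u` by `t^A`
gives the residue field approximation `x̄ · q̄′(ā)`. -/

noncomputable section

open Polynomial
open scoped Classical

/-- A Henselian discrete valuation field with residue field `K`:
`Fc` is the field, `O` its ring of integers, `t` a fixed prime element and `res` the
residue map.  The axioms say that `O` is a valuation subring of `Fc`, `t` is irreducible
in `O`, `res` is surjective with kernel `tO`, the valuation is discrete (every nonzero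
element is a unit of `O` times a power of `t`), and `O` is Henselian (simple roots of the
reduction of a monic polynomial lift). -/
structure HDVF (K : Type) [Field K] : Type 1 where
  Fc : Type
  fieldF : Field Fc
  O : Subring Fc
  t : Fc
  ht : t ∈ O
  res : O →+* K
  hval : ∀ x : Fc, x ∈ O ∨ x⁻¹ ∈ O
  hirr : Irreducible (⟨t, ht⟩ : O)
  hres_surj : Function.Surjective res
  hres_ker : ∀ x : O, res x = 0 ↔ (⟨t, ht⟩ : O) ∣ x
  hdisc : ∀ x : Fc, x ≠ 0 → ∃ (n : ℤ) (u : O), IsUnit u ∧ x = (u : Fc) * t ^ n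
  hensel : ∀ P : Polynomial O, P.Monic → ∀ α : K,
    Polynomial.eval α (P.map res) = 0 →
    Polynomial.eval α (Polynomial.derivative (P.map res)) ≠ 0 →
    ∃ a : O, Polynomial.eval a P = 0 ∧ res a = α

attribute [instance] HDVF.fieldF

namespace HDVF

variable {K : Type} [Field K] (E : HDVF K)

/-- The residue map, extended by zero outside the ring of integers. -/
def resF (x : E.Fc) : K := if h : x ∈ E.O then E.res ⟨x, h⟩ else 0

/-- The translated fractional ideal `a + t^c O`. -/
def tfi (a : E.Fc) (c : ℤ) : Set E.Fc := {y : E.Fc | ∃ z ∈ E.O, y = a + E.t ^ c * z}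

end HDVF

theorem Polynomial.exists_eval_add_eq_of_map_eq_zero {R S : Type*} [CommRing R] [CommRing S]
    (f : R →+* S) (q : R[X]) (a h : R) (hh : f h = 0) :
    ∃ u : R, q.eval (a + h) = q.eval a + h * u ∧ f u = f (q.derivative.eval a) := by
  obtain ⟨k, hk⟩ := q.binomExpansion a h
  exact ⟨q.derivative.eval a + k * h, by rw [hk]; ring, by simp [hh]⟩

theorem Polynomial.eval_coe_map_subtype {R : Type*} [CommRing R] {S : Subring R} (q : S[X])
    (y : S) : (q.map S.subtype).eval (y : R) = q.eval y :=
  eval_map_apply (f := S.subtype) y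

namespace HDVF

variable {K : Type} [Field K] (E : HDVF K)

theorem t_ne_zero : E.t ≠ 0 := fun h => E.hirr.ne_zero (Subtype.ext h)

theorem resF_coe (y : E.O) : E.resF (y : E.Fc) = E.res y := dif_pos y.2

theorem isUnit_of_res_ne_zero {y : E.O} (hy : E.res y ≠ 0) : IsUnit y := by
  let V : ValuationSubring E.Fc := { toSubring := E.O, mem_or_inv_mem' := E.hval }
  have : IsLocalRing E.O := inferInstanceAs (IsLocalRing V)
  have hker : RingHom.ker E.res = IsLocalRing.maximalIdeal E.O :=
    IsLocalRing.eq_maximalIdeal (RingHom.ker_isMaximal_of_surjective _ E.hres_surj)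
  by_contra hunit
  exact hy (by rwa [← RingHom.mem_ker, hker, IsLocalRing.mem_maximalIdeal, mem_nonunits_iff])

theorem exists_coe_eq_zpow_mul {A : ℤ} (hA : 1 ≤ A) (z : E.O) :
    ∃ h : E.O, (h : E.Fc) = E.t ^ A * z ∧ E.res h = 0 := by
  refine ⟨⟨E.t, E.ht⟩ ^ A.toNat * z, ?_, ?_⟩
  · rw [← Int.toNat_of_nonneg (by omega : 0 ≤ A), zpow_natCast]
    rfl
  · rw [E.hres_ker]
    exact (dvd_pow_self _ (by omega)).mul_right z

variable (q : E.O[X]) (a : E.O)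

theorem eval_mem_tfi_of_mem_tfi {A : ℤ} (hA : 1 ≤ A) {y : E.Fc} (hy : y ∈ E.tfi a A) :
    y ∈ E.O ∧ E.resF y = E.res a ∧
      (q.map E.O.subtype).eval y ∈ E.tfi ((q.eval a : E.O) : E.Fc) A := by
  obtain ⟨z, hz, rfl⟩ := hy
  obtain ⟨h, hh, hres⟩ := E.exists_coe_eq_zpow_mul hA ⟨z, hz⟩
  obtain ⟨u, hu, -⟩ := q.exists_eval_add_eq_of_map_eq_zero E.res a h hres
  have hy : (a : E.Fc) + E.t ^ A * z = ((a + h : E.O) : E.Fc) := by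
    rw [Subring.coe_add, hh]
  rw [hy, E.resF_coe, map_add, hres, add_zero]
  refine ⟨(a + h).2, rfl, _, (⟨z, hz⟩ * u : E.O).2, ?_⟩
  rw [eval_coe_map_subtype, hu, Subring.coe_add, Subring.coe_mul, Subring.coe_mul, hh]
  ring

theorem mem_tfi_of_eval_mem_tfi (hsimple : E.res (q.derivative.eval a) ≠ 0) {A : ℤ}
    {y : E.Fc} (hy : y ∈ E.O) (hres : E.resF y = E.res a)
    (hq : (q.map E.O.subtype).eval y ∈ E.tfi ((q.eval a : E.O) : E.Fc) A) : y ∈ E.tfi a A := by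
  obtain ⟨z, hz, hqz⟩ := hq
  set h : E.O := ⟨y, hy⟩ - a
  have hresh : E.res h = 0 := by
    rw [map_sub, ← E.resF_coe, ← hres, sub_self]
  obtain ⟨u, hu, hresu⟩ := q.exists_eval_add_eq_of_map_eq_zero E.res a h hresh
  obtain ⟨v, rfl⟩ := E.isUnit_of_res_ne_zero (hresu ▸ hsimple : E.res u ≠ 0)
  have hhv : (h : E.Fc) * v = E.t ^ A * z := by
    rw [show y = ((a + h : E.O) : E.Fc) by simp [h], eval_coe_map_subtype, hu,
      Subring.coe_add, Subring.coe_mul] at hqz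
    exact add_left_cancel hqz
  refine ⟨((⟨z, hz⟩ * ↑v⁻¹ : E.O) : E.Fc), Subtype.property _, ?_⟩
  have hvv : ((v : E.O) : E.Fc) * ((v⁻¹ : E.Oˣ) : E.O) = 1 := by
    rw [← Subring.coe_mul, Units.mul_inv, Subring.coe_one]
  calc y = a + h * v * ((v⁻¹ : E.Oˣ) : E.O) := by rw [mul_assoc, hvv, mul_one]; simp [h]
    _ = _ := by rw [hhv, mul_assoc, Subring.coe_mul]

theorem resF_sub_mul_zpow_neg {A : ℤ} (hA : 1 ≤ A) {x : E.Fc} (hx : x ∈ E.O) :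
    E.resF (((q.map E.O.subtype).eval (a + E.t ^ A * x) - (q.eval a : E.O)) * E.t ^ (-A)) =
      E.res (q.derivative.eval a) * E.resF x := by
  obtain ⟨h, hh, hres⟩ := E.exists_coe_eq_zpow_mul hA ⟨x, hx⟩
  obtain ⟨u, hu, hresu⟩ := q.exists_eval_add_eq_of_map_eq_zero E.res a h hres
  have hquot : ((q.map E.O.subtype).eval (a + E.t ^ A * x) - (q.eval a : E.O)) * E.t ^ (-A) =
      ((⟨x, hx⟩ * u : E.O) : E.Fc) := by
    rw [show (a : E.Fc) + E.t ^ A * x = ((a + h : E.O) : E.Fc) by rw [Subring.coe_add, hh],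
      eval_coe_map_subtype, hu, Subring.coe_add,
      add_sub_cancel_left, Subring.coe_mul, Subring.coe_mul, hh, zpow_neg]
    field_simp [zpow_ne_zero A E.t_ne_zero]
  rw [hquot, E.resF_coe, map_mul, hresu, E.resF_coe ⟨x, hx⟩, mul_comm]

end HDVF

theorem statement5_general {K : Type} [Field K] (E : HDVF K)
    (q : Polynomial E.O)
    (b : E.Fc) (a : E.O)
    (hroot : Polynomial.eval (a : E.Fc) (q.map E.O.subtype) = b)
    (hsimple : Polynomial.eval (E.res a) (Polynomial.derivative (q.map E.res)) ≠ 0)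
    (A : ℤ) (hA : 1 ≤ A) :
    ({x : E.Fc | x ∈ E.O ∧ E.resF x = E.res a ∧
        Polynomial.eval x (q.map E.O.subtype) ∈ E.tfi b A} = E.tfi (a : E.Fc) A) ∧
    ∀ x ∈ E.O,
      E.resF ((Polynomial.eval ((a : E.Fc) + E.t ^ A * x) (q.map E.O.subtype) - b) *
          E.t ^ (-A)) =
        Polynomial.eval (E.resF x)
          (Polynomial.C (Polynomial.eval (E.res a) (Polynomial.derivative (q.map E.res))) *
            Polynomial.X) := by
  rw [derivative_map, eval_map_apply] at hsimple ⊢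
  rw [eval_coe_map_subtype] at hroot
  subst hroot
  refine ⟨Set.ext fun y => ⟨fun ⟨hy, hres, hq⟩ => ?_, E.eval_mem_tfi_of_mem_tfi q a hA⟩,
    fun x hx => ?_⟩
  · exact E.mem_tfi_of_eval_mem_tfi q a hsimple hy hres hq
  · rw [eval_mul, eval_C, eval_X]
    exact E.resF_sub_mul_zpow_neg q a hA hx

/-- If q ∈ O_F[X] has degree ≥ 1 and non-zero image in K[X], and
a ∈ O_F satisfies q(a) = b with q̄′(ā) ≠ 0, then for every A ≥ 1 the set
{x ∈ O_F : x̄ = ā, q(x) ∈ b + t^A O_F} equals a + t^A O_F, and the corresponding residue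
field approximation is ψ(X) = q̄′(ā)·X. -/
theorem statement5 {K : Type} [Field K] [Infinite K] (E : HDVF K)
    (q : Polynomial E.O) (hdeg : 1 ≤ q.natDegree) (hqbar : q.map E.res ≠ 0)
    (b : E.Fc) (a : E.O)
    (hroot : Polynomial.eval (a : E.Fc) (q.map E.O.subtype) = b)
    (hsimple : Polynomial.eval (E.res a) (Polynomial.derivative (q.map E.res)) ≠ 0)
    (A : ℤ) (hA : 1 ≤ A) :
    ({x : E.Fc | x ∈ E.O ∧ E.resF x = E.res a ∧
        Polynomial.eval x (q.map E.O.subtype) ∈ E.tfi b A} = E.tfi (a : E.Fc) A) ∧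
    ∀ x ∈ E.O,
      E.resF ((Polynomial.eval ((a : E.Fc) + E.t ^ A * x) (q.map E.O.subtype) - b) *
          E.t ^ (-A)) =
        Polynomial.eval (E.resF x)
          (Polynomial.C (Polynomial.eval (E.res a) (Polynomial.derivative (q.map E.res))) *
            Polynomial.X) :=
  statement5_general E q b a hroot hsimple A hA
end
end

section
/- Let q ∈ O_F[X] be a polynomial of degree ≥ 1 with non-zero image q̄ ∈ K[X], and let b ∈ O_F. Let ω₁,…,ω_r be the simple solutions in K of q̄(X) = b̄ (i.e. those ω with q̄(ω) = b̄ and q̄′(ω) ≠ 0), and for each i let ω̌_i ∈ O_F be the Hensel lift of ω_i with q(ω̌_i) = b. Then for every integer A ≥ 1, {x ∈ O_F : q̄′(x̄) ≠ 0 and q(x) ∈ b + t^A O_F} = ⨆_{i=1}^r (ω̌_i + t^A O_F), a disjoint union. -/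
noncomputable section

open Polynomial
open scoped Classical

section Helpers

variable {K : Type} [Field K] (E : HDVF K)

lemma ht_ne : (E.t : E.Fc) ≠ 0 := fun h => E.hirr.ne_zero (Subtype.ext h)

lemma zpow_mem' {n : ℤ} (hn : 0 ≤ n) : E.t ^ n ∈ E.O := by
  lift n to ℕ using hn
  rw [zpow_natCast]
  exact pow_mem E.ht n

lemma t_mul_zpow {n : ℤ} (hn : 1 ≤ n) : E.t * E.t ^ (n - 1) = E.t ^ n := by
  rw [← zpow_one_add₀ (ht_ne E)]
  norm_num

lemma res_tpow_mul_eq_zero {n : ℤ} (hn : 1 ≤ n) {z : E.Fc} (hz : z ∈ E.O)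
    (h : E.t ^ n * z ∈ E.O) : E.res ⟨E.t ^ n * z, h⟩ = 0 := by
  rw [E.hres_ker]
  refine ⟨⟨E.t ^ (n - 1) * z, mul_mem (zpow_mem' E (by omega)) hz⟩, ?_⟩
  ext
  show E.t ^ n * z = E.t * (E.t ^ (n - 1) * z)
  rw [← mul_assoc, t_mul_zpow E hn]

lemma exists_inv_of_res_ne (x : E.O) (hx : E.res x ≠ 0) : ∃ y : E.O, x * y = 1 := by
  have hx0 : (x : E.Fc) ≠ 0 := by
    intro h
    exact hx (by rw [show x = 0 from Subtype.ext h, map_zero])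
  obtain ⟨n, u, hu, hxe⟩ := E.hdisc x hx0
  rcases le_or_gt n 0 with hn | hn
  · have hu0 : (u : E.Fc) ≠ 0 := by
      intro h
      rw [hxe, h, zero_mul] at hx0
      exact hx0 rfl
    have huinv : (u : E.Fc)⁻¹ ∈ E.O := by
      have h1 : ((hu.unit⁻¹ : E.Oˣ) : E.O) * u = 1 := by
        have := hu.unit.inv_mul
        rwa [show (hu.unit : E.O) = u from rfl] at this
      have h2 : (((hu.unit⁻¹ : E.Oˣ) : E.O) : E.Fc) * (u : E.Fc) = 1 := by
        exact_mod_cast congrArg (Subtype.val) h1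
      rw [inv_eq_of_mul_eq_one_right (by rw [mul_comm] at h2; exact h2)]
      exact ((hu.unit⁻¹ : E.Oˣ) : E.O).2
    have hinv : (x : E.Fc)⁻¹ ∈ E.O := by
      rw [hxe, mul_inv, ← zpow_neg]
      exact mul_mem huinv (zpow_mem' E (by omega))
    refine ⟨⟨(x : E.Fc)⁻¹, hinv⟩, Subtype.ext ?_⟩
    exact mul_inv_cancel₀ hx0
  · exfalso
    apply hx
    rw [E.hres_ker]
    refine ⟨u * ⟨E.t ^ (n - 1), zpow_mem' E (by omega)⟩, Subtype.ext ?_⟩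
    show (x : E.Fc) = E.t * ((u : E.Fc) * E.t ^ (n - 1))
    rw [hxe, ← t_mul_zpow E (by omega : (1:ℤ) ≤ n)]
    ring

lemma res_eval (q : Polynomial E.O) (a : E.O) :
    Polynomial.eval (E.res a) (q.map E.res) = E.res (Polynomial.eval a q) := by
  rw [Polynomial.eval_map, Polynomial.eval₂_at_apply]

lemma evalF (q : Polynomial E.O) (a : E.O) :
    Polynomial.eval (a : E.Fc) (q.map E.O.subtype) = ((Polynomial.eval a q : E.O) : E.Fc) := by
  rw [Polynomial.eval_map]
  exact Polynomial.eval₂_at_apply E.O.subtype a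

end Helpers

/-- Let q ∈ O_F[X] have degree ≥ 1 and non-zero image in K[X], let
b ∈ O_F, let ω₁, …, ω_r be the simple solutions in K of q̄(X) = b̄, and let ω̌ᵢ be
Hensel lifts with q(ω̌ᵢ) = b.  Then for every A ≥ 1,
{x ∈ O_F : q̄′(x̄) ≠ 0, q(x) ∈ b + t^A O_F} is the disjoint union of the ω̌ᵢ + t^A O_F. -/
theorem statement6 {K : Type} [Field K] [Infinite K] (E : HDVF K)
    (q : Polynomial E.O) (hdeg : 1 ≤ q.natDegree) (hqbar : q.map E.res ≠ 0)
    (b : E.O) (r : ℕ) (ω : Fin r → K) (hinj : Function.Injective ω)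
    (hsimple : ∀ i, Polynomial.eval (ω i) (q.map E.res) = E.res b ∧
      Polynomial.eval (ω i) (Polynomial.derivative (q.map E.res)) ≠ 0)
    (hall : ∀ z : K, Polynomial.eval z (q.map E.res) = E.res b →
      Polynomial.eval z (Polynomial.derivative (q.map E.res)) ≠ 0 → ∃ i, ω i = z)
    (ωc : Fin r → E.O)
    (hlift : ∀ i, E.res (ωc i) = ω i ∧
      Polynomial.eval ((ωc i : E.Fc)) (q.map E.O.subtype) = (b : E.Fc))
    (A : ℤ) (hA : 1 ≤ A) :
    ({x : E.Fc | x ∈ E.O ∧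
        Polynomial.eval (E.resF x) (Polynomial.derivative (q.map E.res)) ≠ 0 ∧
        Polynomial.eval x (q.map E.O.subtype) ∈ E.tfi (b : E.Fc) A}
      = ⋃ i, E.tfi ((ωc i : E.Fc)) A) ∧
    ∀ i j, i ≠ j → Disjoint (E.tfi ((ωc i : E.Fc)) A) (E.tfi ((ωc j : E.Fc)) A) := by
  have htA : E.t ^ A ∈ E.O := zpow_mem' E (by omega)
  -- Hensel lift value in O
  have hqω : ∀ i, Polynomial.eval (ωc i) q = b := by
    intro i
    have := (hlift i).2
    rw [evalF E q (ωc i)] at this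
    exact Subtype.ext this
  constructor
  · ext x
    simp only [Set.mem_setOf_eq, Set.mem_iUnion]
    constructor
    · rintro ⟨hx, hd, z, hz, hqx⟩
      set xO : E.O := ⟨x, hx⟩ with hxO
      have hresF : E.resF x = E.res xO := dif_pos hx
      have hqxO : Polynomial.eval xO q - b = ⟨E.t ^ A * z, mul_mem htA hz⟩ := by
        apply Subtype.ext
        show ((Polynomial.eval xO q : E.O) : E.Fc) - (b : E.Fc) = E.t ^ A * z
        rw [← evalF E q xO]
        show Polynomial.eval x (q.map E.O.subtype) - (b : E.Fc) = E.t ^ A * z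
        rw [hqx]; ring
      have hres_eq : E.res (Polynomial.eval xO q) = E.res b := by
        have h0 : E.res (Polynomial.eval xO q - b) = 0 := by
          rw [hqxO]; exact res_tpow_mul_eq_zero E hA hz _
        rw [map_sub] at h0
        exact sub_eq_zero.mp h0
      obtain ⟨i, hi⟩ := hall (E.res xO) (by rw [res_eval]; exact hres_eq)
        (by rw [← hresF]; exact hd)
      refine ⟨i, ?_⟩
      -- Taylor expansion
      set ε : E.O := xO - ωc i with hε
      have hresε : E.res ε = 0 := by
        rw [hε, map_sub, (hlift i).1, hi, sub_self]
      obtain ⟨c, hc⟩ := Polynomial.binomExpansion q (ωc i) ε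
      have hsum : ωc i + ε = xO := by rw [hε]; ring
      rw [hsum, hqω i] at hc
      set v : E.O := Polynomial.eval (ωc i) (Polynomial.derivative q) + c * ε with hv
      have hεv : Polynomial.eval xO q - b = ε * v := by rw [hc, hv]; ring
      have hresv : E.res v ≠ 0 := by
        rw [hv, map_add, map_mul, hresε, mul_zero, add_zero]
        intro h
        apply (hsimple i).2
        rw [Polynomial.derivative_map, ← (hlift i).1, res_eval]
        exact h
      obtain ⟨w, hw⟩ := exists_inv_of_res_ne E v hresv
      have hεval : ε = ⟨E.t ^ A * z, mul_mem htA hz⟩ * w := by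
        have : ε * (v * w) = (Polynomial.eval xO q - b) * w := by
          rw [hεv]; ring
        rw [hw, mul_one, hqxO] at this
        exact this
      refine ⟨z * w, mul_mem hz w.2, ?_⟩
      have : (ε : E.Fc) = E.t ^ A * (z * (w : E.Fc)) := by
        rw [hεval]
        push_cast
        ring
      have hxε : x = (ωc i : E.Fc) + (ε : E.Fc) := by
        rw [hε]; push_cast; ring
      rw [hxε, this]
    · rintro ⟨i, z, hz, hxeq⟩
      have hx : x ∈ E.O := by
        rw [hxeq]; exact add_mem (ωc i).2 (mul_mem htA hz)
      set xO : E.O := ⟨x, hx⟩ with hxO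
      have hxO_eq : xO = ωc i + ⟨E.t ^ A * z, mul_mem htA hz⟩ := by
        apply Subtype.ext; exact hxeq
      have hresx : E.res xO = ω i := by
        rw [hxO_eq, map_add, (hlift i).1, res_tpow_mul_eq_zero E hA hz, add_zero]
      have hresF : E.resF x = ω i := by rw [HDVF.resF, dif_pos hx]; exact hresx
      refine ⟨hx, ?_, ?_⟩
      · rw [hresF]; exact (hsimple i).2
      · obtain ⟨d, hd⟩ := Polynomial.sub_dvd_eval_sub xO (ωc i) q
        refine ⟨(z * (d : E.Fc)), mul_mem hz d.2, ?_⟩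
        have h1 : Polynomial.eval x (q.map E.O.subtype)
            = ((Polynomial.eval xO q : E.O) : E.Fc) := evalF E q xO
        have h2 : ((Polynomial.eval xO q : E.O) : E.Fc)
            = (b : E.Fc) + E.t ^ A * (z * (d : E.Fc)) := by
          have : Polynomial.eval xO q = b + (xO - ωc i) * d := by
            rw [← hqω i, ← hd]; ring
          rw [this]
          push_cast
          have : ((xO : E.Fc) - (ωc i : E.Fc)) = E.t ^ A * z := by
            show x - (ωc i : E.Fc) = E.t ^ A * z
            rw [hxeq]; ring
          rw [this]; ring
        rw [h1, h2]
  · intro i j hij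
    rw [Set.disjoint_left]
    rintro y ⟨z1, hz1, hy1⟩ ⟨z2, hz2, hy2⟩
    apply hij
    apply hinj
    rw [← (hlift i).1, ← (hlift j).1]
    have hdiff : (ωc i : E.Fc) - (ωc j : E.Fc) = E.t ^ A * (z2 - z1) := by
      have : (ωc i : E.Fc) + E.t ^ A * z1 = (ωc j : E.Fc) + E.t ^ A * z2 := by
        rw [← hy1, ← hy2]
      linear_combination this
    have hmemd : E.t ^ A * (z2 - z1) ∈ E.O := mul_mem htA (sub_mem hz2 hz1)
    have h0 : E.res (ωc i - ωc j) = 0 := by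
      have : ωc i - ωc j = ⟨E.t ^ A * (z2 - z1), hmemd⟩ := Subtype.ext hdiff
      rw [this]
      exact res_tpow_mul_eq_zero E hA (sub_mem hz2 hz1) _
    rw [map_sub, sub_eq_zero] at h0
    exact h0
end
end

section
/- Let q ∈ O_F[X] be a polynomial of degree ≥ 1 such that the image of q′ in K[X] is non-zero, and let A = 1 or A = 2. Then there exist finitely many b₁,…,b_m ∈ O_F such that for every b ∈ O_F, if the set {x ∈ O_F : q(x) ∈ b + t^A O_F and q̄′(x̄) = 0} is non-empty, then b ≡ b_i mod t^A O_F for some i ∈ {1,…,m}. -/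
noncomputable section

open Polynomial
open scoped Classical

/-
If `x ∈ O` has `q̄′(x̄) = 0`, then `x̄` is one of the finitely many roots of `q̄′`; let `a` be a fixed
lift of that root. Then `t ∣ x - a` and `t ∣ q′(a)`, so the Taylor expansion
`q(x) = q(a) + q′(a)(x - a) + k (x - a)²` gives `t² ∣ q(x) - q(a)`. Hence `b ≡ q(x) ≡ q(a)` modulo
`t^A` for `A ≤ 2`, and the values `q(a)` over the lifted roots are the required `bᵢ`.
-/

theorem Polynomial.sq_dvd_eval_sub_eval {R : Type*} [CommRing R] {π x a : R} (q : R[X])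
    (hxa : π ∣ x - a) (hq' : π ∣ q.derivative.eval a) : π ^ 2 ∣ q.eval x - q.eval a := by
  obtain ⟨k, hk⟩ := q.binomExpansion a (x - a)
  rw [add_sub_cancel] at hk
  rw [hk, add_sub_right_comm, add_sub_cancel_left, sq, sq]
  exact dvd_add (mul_dvd_mul hq' hxa) (dvd_mul_of_dvd_right (mul_dvd_mul hxa hxa) k)

theorem Polynomial.pow_dvd_eval_sub_eval_of_le_two {R : Type*} [CommRing R] {π x a : R}
    (q : R[X]) {n : ℕ} (hn : n ≤ 2) (hxa : π ∣ x - a) (hq' : π ∣ q.derivative.eval a) :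
    π ^ n ∣ q.eval x - q.eval a :=
  (pow_dvd_pow π hn).trans (q.sq_dvd_eval_sub_eval hxa hq')

namespace HDVF

variable {K : Type} [Field K] (E : HDVF K)

def uniformizer : E.O := ⟨E.t, E.ht⟩

@[simp]
theorem coe_uniformizer : (E.uniformizer : E.Fc) = E.t := rfl

variable {E}

theorem uniformizer_dvd_sub_of_res_eq {x a : E.O} (h : E.res x = E.res a) :
    E.uniformizer ∣ x - a :=
  (E.hres_ker _).1 (by rw [map_sub, h, sub_self])

theorem resF_of_mem {x : E.Fc} (hx : x ∈ E.O) : E.resF x = E.res ⟨x, hx⟩ :=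
  dif_pos hx

theorem mem_tfi_symm {x a : E.Fc} {c : ℤ} (h : x ∈ E.tfi a c) : a ∈ E.tfi x c := by
  obtain ⟨z, hz, rfl⟩ := h
  exact ⟨-z, neg_mem hz, by ring⟩

theorem mem_tfi_trans {x y a : E.Fc} {c : ℤ} (hxy : x ∈ E.tfi y c) (hya : y ∈ E.tfi a c) :
    x ∈ E.tfi a c := by
  obtain ⟨z, hz, rfl⟩ := hxy
  obtain ⟨w, hw, rfl⟩ := hya
  exact ⟨w + z, add_mem hw hz, by ring⟩

theorem coe_mem_tfi_of_pow_dvd_sub {x a : E.O} {n : ℕ} (h : E.uniformizer ^ n ∣ x - a) :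
    (x : E.Fc) ∈ E.tfi a n := by
  obtain ⟨w, hw⟩ := h
  refine ⟨w, w.2, ?_⟩
  have hw' : (x : E.Fc) - a = E.t ^ n * w := by
    simpa using congrArg Subtype.val hw
  rw [zpow_natCast, ← hw', add_sub_cancel]

end HDVF

theorem statement8_general {K : Type} [Field K] (E : HDVF K)
    (q : Polynomial E.O)
    (hq' : (Polynomial.derivative q).map E.res ≠ 0)
    (A : ℤ) (hA : A = 1 ∨ A = 2) :
    ∃ (m : ℕ) (b : Fin m → E.O), ∀ b' : E.O,
      ({x : E.Fc | x ∈ E.O ∧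
          Polynomial.eval x (q.map E.O.subtype) ∈ E.tfi (b' : E.Fc) A ∧
          Polynomial.eval (E.resF x) (Polynomial.derivative (q.map E.res)) = 0}).Nonempty →
      ∃ i, (b' : E.Fc) ∈ E.tfi ((b i : E.Fc)) A := by
  obtain ⟨n, hn, rfl⟩ : ∃ n : ℕ, n ≤ 2 ∧ A = n := by
    rcases hA with rfl | rfl
    exacts [⟨1, by norm_num, rfl⟩, ⟨2, le_rfl, rfl⟩]
  set roots := ((derivative q).map E.res).roots.toList
  let lift := Function.surjInv E.hres_surj
  refine ⟨roots.length, fun i => q.eval (lift roots[i]), ?_⟩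
  rintro b' ⟨x, hxO, hqx, hroot⟩
  rw [HDVF.resF_of_mem hxO, derivative_map] at hroot
  obtain ⟨i, hi⟩ := List.mem_iff_get.1 (Multiset.mem_toList.2 (mem_roots'.2 ⟨hq', hroot⟩))
  have hres : E.res (lift roots[i]) = E.res ⟨x, hxO⟩ := (Function.surjInv_eq _ _).trans hi
  have hq'a : E.uniformizer ∣ (derivative q).eval (lift roots[i]) := by
    apply (E.hres_ker _).1
    rw [← eval_map_apply, hres, hroot]
  have hdvd := q.pow_dvd_eval_sub_eval_of_le_two hn
    (HDVF.uniformizer_dvd_sub_of_res_eq hres.symm) hq'a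
  rw [show x = E.O.subtype ⟨x, hxO⟩ from rfl, eval_map_apply] at hqx
  exact ⟨i, HDVF.mem_tfi_trans (HDVF.mem_tfi_symm hqx) (HDVF.coe_mem_tfi_of_pow_dvd_sub hdvd)⟩

/-- Let q ∈ O_F[X] have degree ≥ 1 with the image of q′ in K[X]
non-zero, and let A = 1 or 2.  Then there are finitely many b₁, …, b_m ∈ O_F such that
whenever {x ∈ O_F : q(x) ∈ b + t^A O_F, q̄′(x̄) = 0} is non-empty, b ≡ bᵢ mod t^A O_F for
some i. -/
theorem statement8 {K : Type} [Field K] [Infinite K] (E : HDVF K)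
    (q : Polynomial E.O) (hdeg : 1 ≤ q.natDegree)
    (hq' : (Polynomial.derivative q).map E.res ≠ 0)
    (A : ℤ) (hA : A = 1 ∨ A = 2) :
    ∃ (m : ℕ) (b : Fin m → E.O), ∀ b' : E.O,
      ({x : E.Fc | x ∈ E.O ∧
          Polynomial.eval x (q.map E.O.subtype) ∈ E.tfi (b' : E.Fc) A ∧
          Polynomial.eval (E.resF x) (Polynomial.derivative (q.map E.res)) = 0}).Nonempty →
      ∃ i, (b' : E.Fc) ∈ E.tfi ((b i : E.Fc)) A :=
  statement8_general E q hq' A hA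
end
end
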